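/- Let p, q be polynomials with p represented by q (i.e. p(T²) = T^{deg q} q(T+T^{−1})) and p self-reciprocal. Then all roots of p lie on the unit circle S¹ if and only if all roots of q are real and lie in the interval [−2, 2]. -/

import Mathlib

/-!
Every `λ ∈ ℂ` is `z + z⁻¹` for some `z ≠ 0`, and the representation identity makes `λ` a root of
`q` exactly when `z²` is a root of `p`. Self-reciprocity gives `p(0) = lc(p) ≠ 0`, so every root of
`p` is such a `z²`. It remains that the Joukowski map `z ↦ z + z⁻¹` sends `z` into `[-2, 2]`
exactly when `‖z‖ = 1`.
-/

open Polynomial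

namespace Polynomial

theorem reverse_eq_self_of_forall_eval {K : Type*} [Field K] [Infinite K] {p : K[X]}
    (h : ∀ z : K, z ≠ 0 → z ^ p.natDegree * p.eval z⁻¹ = p.eval z) : p.reverse = p := by
  refine eq_of_infinite_eval_eq _ _ ((Set.finite_singleton 0).infinite_compl.mono fun z hz => ?_)
  have hz : z ≠ 0 := hz
  let := invertibleOfNonzero (inv_ne_zero hz)
  have h' := eval₂_reverse_mul_pow (RingHom.id K) z⁻¹ p
  rw [invOf_eq_inv, inv_inv, eval₂_id, eval₂_id] at h'
  change p.reverse.eval z = p.eval z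
  rw [← h z hz, ← h', mul_comm, mul_assoc, ← mul_pow, inv_mul_cancel₀ hz, one_pow, mul_one]

theorem eval_zero_ne_zero_of_reverse_eq_self {R : Type*} [Semiring R] {p : R[X]} (hp : p ≠ 0)
    (h : p.reverse = p) : p.eval 0 ≠ 0 := by
  rw [← coeff_zero_eq_eval_zero, ← h, coeff_zero_reverse]
  exact leadingCoeff_ne_zero.mpr hp

end Polynomial

namespace Complex

theorem add_inv_eq_two_mul_re_of_norm_eq_one {z : ℂ} (hz : ‖z‖ = 1) : z + z⁻¹ = 2 * z.re := by
  rw [inv_eq_conj hz, add_conj, ofReal_mul, ofReal_ofNat]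

theorem norm_eq_one_of_add_inv_eq_ofReal {z : ℂ} {l : ℝ} (hz : z ≠ 0) (hl : |l| ≤ 2)
    (h : z + z⁻¹ = l) : ‖z‖ = 1 := by
  have hquad : z ^ 2 + 1 = l * z := by rw [← h]; field_simp
  have hre := congrArg re hquad
  have him := congrArg im hquad
  simp only [pow_two, add_re, mul_re, one_re, ofReal_re, ofReal_im, add_im, mul_im, one_im] at hre him
  obtain ⟨hl₁, hl₂⟩ := abs_le.mp hl
  suffices normSq z = 1 by rw [norm_def, this, Real.sqrt_one]
  rw [normSq_apply]
  rcases mul_eq_zero.mp (show z.im * (2 * z.re - l) = 0 by linarith) with him0 | hre0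
  · -- for real `z`, `(z² - 1)² = z² (l² - 4) ≤ 0`
    rw [him0] at hre ⊢
    have : (z.re ^ 2 - 1) ^ 2 ≤ 0 := by
      nlinarith [mul_nonneg (sq_nonneg z.re) (show 0 ≤ 4 - l ^ 2 by nlinarith)]
    nlinarith [sq_nonneg (z.re ^ 2 - 1)]
  · nlinarith

theorem norm_eq_one_iff_add_inv_mem_Icc {z : ℂ} (hz : z ≠ 0) :
    ‖z‖ = 1 ↔ (z + z⁻¹).im = 0 ∧ -2 ≤ (z + z⁻¹).re ∧ (z + z⁻¹).re ≤ 2 := by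
  constructor
  · intro h
    rw [add_inv_eq_two_mul_re_of_norm_eq_one h]
    have := abs_le.mp ((abs_re_le_norm z).trans h.le)
    refine ⟨?_, ?_, ?_⟩ <;> simp <;> linarith
  · rintro ⟨him, hl₁, hl₂⟩
    exact norm_eq_one_of_add_inv_eq_ofReal hz (abs_le.mpr ⟨hl₁, hl₂⟩) (ext rfl him)

theorem exists_ne_zero_add_inv_eq (w : ℂ) : ∃ z : ℂ, z ≠ 0 ∧ z + z⁻¹ = w := by
  obtain ⟨z, hz⟩ := exists_quadratic_eq_zero (one_ne_zero (α := ℂ))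
    (IsAlgClosed.exists_eq_mul_self (discrim 1 (-w) 1))
  have hz0 : z ≠ 0 := by rintro rfl; simp at hz
  exact ⟨z, hz0, by field_simp; linear_combination hz⟩

end Complex

theorem roots_on_circle_iff_roots_in_Icc_general
    (p q : Polynomial ℂ) (hp : p ≠ 0)
    (hself : ∀ z : ℂ, z ≠ 0 → z ^ p.natDegree * p.eval z⁻¹ = p.eval z)
    (hrep : ∀ z : ℂ, z ≠ 0 → p.eval (z ^ 2) = z ^ q.natDegree * q.eval (z + z⁻¹)) :
    (∀ μ : ℂ, p.IsRoot μ → ‖μ‖ = 1) ↔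
      (∀ lam : ℂ, q.IsRoot lam → lam.im = 0 ∧ -2 ≤ lam.re ∧ lam.re ≤ 2) := by
  have isRoot_q_add_inv_iff {z : ℂ} (hz : z ≠ 0) : q.IsRoot (z + z⁻¹) ↔ p.IsRoot (z ^ 2) := by
    simp only [IsRoot, hrep z hz, mul_eq_zero, pow_ne_zero _ hz, false_or]
  constructor
  · intro h lam hlam
    obtain ⟨z, hz, rfl⟩ := Complex.exists_ne_zero_add_inv_eq lam
    have hz1 : ‖z‖ ^ 2 = 1 := by rw [← norm_pow, h _ ((isRoot_q_add_inv_iff hz).mp hlam)]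
    exact (Complex.norm_eq_one_iff_add_inv_mem_Icc hz).mp
      ((pow_eq_one_iff_of_nonneg (norm_nonneg z) two_ne_zero).mp hz1)
  · intro h μ hμ
    have hμ0 : μ ≠ 0 := by
      rintro rfl
      exact eval_zero_ne_zero_of_reverse_eq_self hp (reverse_eq_self_of_forall_eval hself) hμ
    obtain ⟨z, rfl⟩ := IsAlgClosed.exists_pow_nat_eq μ two_pos
    have hz : z ≠ 0 := by rintro rfl; exact hμ0 (zero_pow two_ne_zero)
    have hz1 : ‖z‖ = 1 :=
      (Complex.norm_eq_one_iff_add_inv_mem_Icc hz).mpr (h _ ((isRoot_q_add_inv_iff hz).mpr hμ))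
    rw [norm_pow, hz1, one_pow]

/-- Let `p`, `q` be polynomials with `p` represented by `q`
(`p(T²) = T^{deg q}·q(T + T⁻¹)`) and `p` self-reciprocal. Then all roots of `p`
lie on the unit circle `S¹` if and only if all roots of `q` are real and lie
in the interval `[-2, 2]`. -/
theorem roots_on_circle_iff_roots_in_Icc
    (p q : Polynomial ℂ) (hp : p ≠ 0) (hq : q ≠ 0)
    (hself : ∀ z : ℂ, z ≠ 0 → z ^ p.natDegree * p.eval z⁻¹ = p.eval z)
    (hrep : ∀ z : ℂ, z ≠ 0 → p.eval (z ^ 2) = z ^ q.natDegree * q.eval (z + z⁻¹)) :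
    (∀ μ : ℂ, p.IsRoot μ → ‖μ‖ = 1) ↔
      (∀ lam : ℂ, q.IsRoot lam → lam.im = 0 ∧ -2 ≤ lam.re ∧ lam.re ≤ 2) :=
  roots_on_circle_iff_roots_in_Icc_general p q hp hself hrep
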